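/- arXiv:1902.00787 — 6 statements merged into one kernel-verified Lean document; each statement's English description precedes it below -/
import Mathlib

section
/- Let ⟪−,−⟫ : A × A → A ⊗ A be a k-bilinear map and let n, m be its associated trilinear maps. Then ⟪−,−⟫ is a double Poisson bracket on A if and only if for all a, b, c ∈ A and all f, g ∈ A* the following three identities hold: (cyclicity) m(f,b,g)(a) = −g(n(a,f,b)); (quartic Stasheff identity) n(ab, f, c) = n(a, b·f, c) + a·n(b, f, c); (quintic Stasheff identity) n(n(a,f,b), g, c) + n(a, m(f,b,g), c) − n(a, f, n(b,g,c)) = 0. Moreover, the assignment ⟪−,−⟫ ↦ n is injective: two k-bilinear maps A × A → A ⊗ A with the same associated trilinear map n coincide. (This is the degree d = 0, trivially graded case of Theorem 5.1, identifying fully manageable nice pre-Calabi-Yau structures on A with double Poisson brackets on A.) -/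
open TensorProduct

noncomputable section

variable {k : Type*} [Field k] [CharZero k]
variable {A : Type*} [NonUnitalRing A] [Module k A] [SMulCommClass k A A] [IsScalarTower k A A]

/-- Outer left action of `A` on `A ⊗ A`: `a · (u ⊗ v) = (a*u) ⊗ v`. -/
def lAct (a : A) : A ⊗[k] A →ₗ[k] A ⊗[k] A :=
  TensorProduct.map (LinearMap.mulLeft k a) LinearMap.id

/-- Outer right action of `A` on `A ⊗ A`: `(u ⊗ v) · b = u ⊗ (v*b)`. -/
def rAct (b : A) : A ⊗[k] A →ₗ[k] A ⊗[k] A :=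
  TensorProduct.map LinearMap.id (LinearMap.mulRight k b)

/-- `⟪a, u ⊗ v⟫_L = ⟪a,u⟫ ⊗ v`, extended linearly. -/
def brL (br : A →ₗ[k] A →ₗ[k] A ⊗[k] A) (a : A) :
    A ⊗[k] A →ₗ[k] (A ⊗[k] A) ⊗[k] A :=
  TensorProduct.map (br a) LinearMap.id

/-- The cyclic permutation `σ(u ⊗ v ⊗ w) = w ⊗ u ⊗ v` on `(A ⊗ A) ⊗ A`. -/
def cyc : (A ⊗[k] A) ⊗[k] A →ₗ[k] (A ⊗[k] A) ⊗[k] A :=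
  (TensorProduct.assoc k A A A).symm.toLinearMap ∘ₗ
    (TensorProduct.comm k (A ⊗[k] A) A).toLinearMap

/-- A double Poisson bracket: antisymmetry, Leibniz, and double Jacobi. -/
def IsDoublePoisson (br : A →ₗ[k] A →ₗ[k] A ⊗[k] A) : Prop :=
  (∀ a b : A, br b a = - (TensorProduct.comm k A A) (br a b)) ∧
  (∀ a b c : A, br a (b * c) = rAct c (br a b) + lAct b (br a c)) ∧
  (∀ a b c : A,
    brL br a (br b c) + cyc (brL br b (br c a)) + cyc (cyc (brL br c (br a b))) = 0)

/-- `(f ⊗ g) : A ⊗ A → k`. -/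
def pair2 (f g : Module.Dual k A) : A ⊗[k] A →ₗ[k] k :=
  TensorProduct.lift ((LinearMap.mul k k).compl₁₂ f g)

/-- The associated trilinear map `n(a,f,b) = (id ⊗ f)(⟪b,a⟫)`. -/
def nMap (br : A →ₗ[k] A →ₗ[k] A ⊗[k] A) (a : A) (f : Module.Dual k A) (b : A) : A :=
  TensorProduct.rid k A (TensorProduct.map LinearMap.id f (br b a))

/-- The associated trilinear map `m(f,a,g)(b) = (f ⊗ g)(⟪b,a⟫)`. -/
def mMap (br : A →ₗ[k] A →ₗ[k] A ⊗[k] A) (f : Module.Dual k A) (a : A)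
    (g : Module.Dual k A) : Module.Dual k A :=
  pair2 f g ∘ₗ br.flip a

/-- The left action of `A` on `A* = Hom_k(A,k)`: `(a·f)(c) = f(c*a)`. -/
def dL (a : A) (f : Module.Dual k A) : Module.Dual k A :=
  f ∘ₗ LinearMap.mulRight k a

/-- The right action of `A` on `A* = Hom_k(A,k)`: `(f·b)(c) = f(b*c)`. -/
def dR (f : Module.Dual k A) (b : A) : Module.Dual k A :=
  f ∘ₗ LinearMap.mulLeft k b

/-!
Write `slantRight f : M ⊗ A → M` for `id ⊗ f` followed by `M ⊗ k ≅ M`. Since `A` is free over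
the field `k`, the maps `slantRight f` jointly separate the points of `M ⊗ A`, so an identity
between tensors may be tested after contracting every tensor factor but the first against
functionals. Contracting the antisymmetry, Leibniz and double Jacobi identities in this way gives,
term by term, cyclicity, the quartic and the quintic identities; only the Jacobi step uses
antisymmetry, to move the bracket's arguments into the order in which `n` and `m` read them.
The same separation shows that `⟪-,-⟫` is recovered from `n`.
-/

section Slant

variable {R V W M N : Type*} [CommRing R] [AddCommGroup V] [Module R V]
  [AddCommGroup W] [Module R W] [AddCommGroup M] [Module R M] [AddCommGroup N] [Module R N]

def slantRight (f : Module.Dual R V) : M ⊗[R] V →ₗ[R] M :=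
  (TensorProduct.rid R M).toLinearMap ∘ₗ f.lTensor M

def slantLeft (f : Module.Dual R V) : V ⊗[R] M →ₗ[R] M :=
  (TensorProduct.lid R M).toLinearMap ∘ₗ f.rTensor M

@[simp]
lemma slantRight_tmul (f : Module.Dual R V) (m : M) (v : V) :
    slantRight f (m ⊗ₜ[R] v) = f v • m := by
  simp [slantRight]

@[simp]
lemma slantLeft_tmul (f : Module.Dual R V) (v : V) (m : M) :
    slantLeft f (v ⊗ₜ[R] m) = f v • m := by
  simp [slantLeft]

lemma slantLeft_comm (f : Module.Dual R V) (u : M ⊗[R] V) :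
    slantLeft f (TensorProduct.comm R M V u) = slantRight f u := by
  induction u using TensorProduct.induction_on <;> simp_all

lemma slantLeft_neg (f : Module.Dual R V) (u : V ⊗[R] M) :
    slantLeft (-f) u = -slantLeft f u :=
  LinearMap.congr_fun (TensorProduct.ext' fun v m => by simp [neg_smul] :
    slantLeft (-f) = -slantLeft (M := M) f) u

lemma slantRight_lTensor (f : Module.Dual R V) (φ : W →ₗ[R] V) (u : M ⊗[R] W) :
    slantRight f (φ.lTensor M u) = slantRight (f ∘ₗ φ) u := by
  induction u using TensorProduct.induction_on <;> simp_all

lemma slantLeft_rTensor (f : Module.Dual R V) (φ : W →ₗ[R] V) (u : W ⊗[R] M) :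
    slantLeft f (φ.rTensor M u) = slantLeft (f ∘ₗ φ) u := by
  induction u using TensorProduct.induction_on <;> simp_all

lemma slantRight_rTensor (f : Module.Dual R V) (φ : M →ₗ[R] N) (u : M ⊗[R] V) :
    slantRight f (φ.rTensor V u) = φ (slantRight f u) := by
  induction u using TensorProduct.induction_on <;> simp_all

theorem ext_slantRight [Module.Free R V] {u v : M ⊗[R] V}
    (h : ∀ f : Module.Dual R V, slantRight f u = slantRight f v) : u = v := by
  classical
  let b := Module.Free.chooseBasis R V
  apply (TensorProduct.equivFinsuppOfBasisRight b).injective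
  ext i
  simp only [TensorProduct.equivFinsuppOfBasisRight_apply]
  exact h (b.coord i)

end Slant

section Bracket

omit [CharZero k] [SMulCommClass k A A] [IsScalarTower k A A]

variable (br : A →ₗ[k] A →ₗ[k] A ⊗[k] A)

@[simp]
lemma pair2_tmul (f g : Module.Dual k A) (x y : A) : pair2 f g (x ⊗ₜ[k] y) = f x * g y := by
  simp [pair2]

lemma pair2_comm (f g : Module.Dual k A) (u : A ⊗[k] A) :
    pair2 f g (TensorProduct.comm k A A u) = pair2 g f u := by
  induction u using TensorProduct.induction_on <;> simp_all [mul_comm]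

lemma apply_slantRight_eq_pair2 (f g : Module.Dual k A) (u : A ⊗[k] A) :
    g (slantRight f u) = pair2 g f u := by
  induction u using TensorProduct.induction_on <;> simp_all [mul_comm]

theorem ext_pair2 {u v : A ⊗[k] A}
    (h : ∀ f g : Module.Dual k A, pair2 f g u = pair2 f g v) : u = v :=
  ext_slantRight fun g => Module.eval_apply_injective k <| LinearMap.ext fun f => by
    simp only [Module.Dual.eval_apply, apply_slantRight_eq_pair2, h]

lemma nMap_eq_slantRight (a : A) (f : Module.Dual k A) (b : A) :
    nMap br a f b = slantRight f (br b a) := rfl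

lemma mMap_apply (f : Module.Dual k A) (a : A) (g : Module.Dual k A) (b : A) :
    mMap br f a g b = pair2 f g (br b a) := rfl

lemma brL_eq_rTensor (a : A) : brL br a = (br a).rTensor A := rfl

lemma slantRight_rAct [IsScalarTower k A A] (f : Module.Dual k A) (b : A) (u : A ⊗[k] A) :
    slantRight f (rAct b u) = slantRight (dL b f) u :=
  slantRight_lTensor f _ u

lemma slantRight_lAct [SMulCommClass k A A] (f : Module.Dual k A) (a : A) (u : A ⊗[k] A) :
    slantRight f (lAct a u) = a * slantRight f u :=
  slantRight_rTensor f _ u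

lemma slantRight_slantRight_cyc (f g : Module.Dual k A) (u : (A ⊗[k] A) ⊗[k] A) :
    slantRight g (slantRight f (cyc u)) = slantLeft (pair2 g f) u := by
  have h : slantRight g ∘ₗ slantRight f ∘ₗ cyc = slantLeft (M := A) (pair2 g f) :=
    TensorProduct.ext_threefold fun x y z => by
      simp [cyc, smul_smul, mul_comm]
  exact LinearMap.congr_fun h u

lemma slantRight_slantRight_cyc_cyc (f g : Module.Dual k A) (u : (A ⊗[k] A) ⊗[k] A) :
    slantRight g (slantRight f (cyc (cyc u))) = slantLeft f (slantRight g u) := by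
  have h : slantRight g ∘ₗ slantRight f ∘ₗ cyc ∘ₗ cyc =
      slantLeft f ∘ₗ slantRight (M := A ⊗[k] A) g :=
    TensorProduct.ext_threefold fun x y z => by
      simp [cyc, smul_smul, mul_comm]
  exact LinearMap.congr_fun h u

theorem cyclicity_iff_antisymm :
    (∀ (a b : A) (f g : Module.Dual k A), mMap br f b g a = -g (nMap br a f b)) ↔
      ∀ a b : A, br b a = -TensorProduct.comm k A A (br a b) := by
  have hrhs : ∀ (a b : A) (f g : Module.Dual k A),
      -g (nMap br a f b) = pair2 f g (-TensorProduct.comm k A A (br b a)) := by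
    intro a b f g
    rw [nMap_eq_slantRight, apply_slantRight_eq_pair2, map_neg, pair2_comm]
  simp only [mMap_apply, hrhs]
  exact ⟨fun h a b => ext_pair2 (h b a), fun h a b f g => by rw [h b a]⟩

theorem quartic_iff_leibniz [SMulCommClass k A A] [IsScalarTower k A A] :
    (∀ (a b c : A) (f : Module.Dual k A),
        nMap br (a * b) f c = nMap br a (dL b f) c + a * nMap br b f c) ↔
      ∀ a b c : A, br a (b * c) = rAct c (br a b) + lAct b (br a c) := by
  have hrhs : ∀ (a b c : A) (f : Module.Dual k A),
      slantRight f (rAct c (br a b) + lAct b (br a c)) =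
        nMap br b (dL c f) a + b * nMap br c f a := by
    intro a b c f
    rw [map_add, slantRight_rAct, slantRight_lAct, nMap_eq_slantRight, nMap_eq_slantRight]
  constructor
  · intro h a b c
    exact ext_slantRight fun f => (h b c a f).trans (hrhs a b c f).symm
  · intro h a b c f
    rw [← hrhs, ← h, nMap_eq_slantRight]

theorem slantRight_slantRight_jacobi
    (hanti : ∀ a b : A, br b a = -TensorProduct.comm k A A (br a b))
    (a b c : A) (f g : Module.Dual k A) :
    slantRight g (slantRight f
        (brL br a (br b c) + cyc (brL br b (br c a)) + cyc (cyc (brL br c (br a b))))) =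
      nMap br (nMap br c f b) g a + nMap br c (mMap br f b g) a
        - nMap br c f (nMap br b g a) := by
  have hm : pair2 g f ∘ₗ br b = -mMap br f b g := by
    ext v
    rw [LinearMap.comp_apply, hanti v b, map_neg, pair2_comm]
    rfl
  have h₁ : slantRight g (slantRight f (brL br a (br b c))) = nMap br (nMap br c f b) g a := by
    rw [brL_eq_rTensor, slantRight_rTensor]
    rfl
  have h₂ : slantRight g (slantRight f (cyc (brL br b (br c a)))) =
      nMap br c (mMap br f b g) a := by
    rw [slantRight_slantRight_cyc, brL_eq_rTensor, slantLeft_rTensor, hm, hanti a c, map_neg,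
      slantLeft_neg, neg_neg, slantLeft_comm]
    rfl
  have h₃ : slantRight g (slantRight f (cyc (cyc (brL br c (br a b))))) =
      -nMap br c f (nMap br b g a) := by
    rw [slantRight_slantRight_cyc_cyc, brL_eq_rTensor, slantRight_rTensor, hanti _ c, map_neg,
      slantLeft_comm]
    rfl
  rw [map_add, map_add, map_add, map_add, h₁, h₂, h₃, sub_eq_add_neg]

theorem quintic_iff_jacobi (hanti : ∀ a b : A, br b a = -TensorProduct.comm k A A (br a b)) :
    (∀ (a b c : A) (f g : Module.Dual k A),
        nMap br (nMap br a f b) g c + nMap br a (mMap br f b g) c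
          - nMap br a f (nMap br b g c) = 0) ↔
      ∀ a b c : A,
        brL br a (br b c) + cyc (brL br b (br c a)) + cyc (cyc (brL br c (br a b))) = 0 := by
  constructor
  · intro h a b c
    refine ext_slantRight fun f => ext_slantRight fun g => ?_
    rw [slantRight_slantRight_jacobi br hanti, map_zero, map_zero]
    exact h c b a f g
  · intro h a b c f g
    rw [← slantRight_slantRight_jacobi br hanti, h, map_zero, map_zero]

theorem eq_of_forall_nMap_eq {br₁ br₂ : A →ₗ[k] A →ₗ[k] A ⊗[k] A}
    (h : ∀ (a b : A) (f : Module.Dual k A), nMap br₁ a f b = nMap br₂ a f b) : br₁ = br₂ :=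
  LinearMap.ext₂ fun b a => ext_slantRight fun f => h a b f

end Bracket

/-- A bilinear map `⟪-,-⟫ : A × A → A ⊗ A` is a double Poisson bracket
iff its associated trilinear maps `n`, `m` satisfy cyclicity, the quartic Stasheff
identity and the quintic Stasheff identity; moreover the assignment `⟪-,-⟫ ↦ n`
is injective. -/
theorem doublePoisson_iff_preCalabiYau (br : A →ₗ[k] A →ₗ[k] A ⊗[k] A) :
    (IsDoublePoisson br ↔
      ((∀ (a b : A) (f g : Module.Dual k A), mMap br f b g a = - g (nMap br a f b)) ∧
       (∀ (a b c : A) (f : Module.Dual k A),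
          nMap br (a * b) f c = nMap br a (dL b f) c + a * nMap br b f c) ∧
       (∀ (a b c : A) (f g : Module.Dual k A),
          nMap br (nMap br a f b) g c + nMap br a (mMap br f b g) c
            - nMap br a f (nMap br b g c) = 0))) ∧
    (∀ br₁ br₂ : A →ₗ[k] A →ₗ[k] A ⊗[k] A,
      (∀ (a b : A) (f : Module.Dual k A), nMap br₁ a f b = nMap br₂ a f b) → br₁ = br₂) := by
  refine ⟨⟨fun ⟨hanti, hleib, hjac⟩ => ?_, fun ⟨hcyc, hquart, hquint⟩ => ?_⟩,
    fun _ _ => eq_of_forall_nMap_eq⟩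
  · exact ⟨(cyclicity_iff_antisymm br).2 hanti, (quartic_iff_leibniz br).2 hleib,
      (quintic_iff_jacobi br hanti).2 hjac⟩
  · have hanti := (cyclicity_iff_antisymm br).1 hcyc
    exact ⟨hanti, (quartic_iff_leibniz br).1 hquart, (quintic_iff_jacobi br hanti).1 hquint⟩
end
end

section
/- A k-bilinear map ⟪−,−⟫ : A × A → A ⊗ A satisfies the Leibniz condition ⟪a,bc⟫ = ⟪a,b⟫·c + b·⟪a,c⟫ for all a, b, c ∈ A if and only if its associated trilinear map n satisfies the quartic Stasheff identity n(ab, f, c) = n(a, b·f, c) + a·n(b, f, c) for all a, b, c ∈ A and f ∈ A*. (This is the equivalence, proved in Theorem 5.1, between condition (ii) of a double Poisson bracket and the Stasheff identity SI(4) restricted to the component A ⊗ A ⊗ A*[−1] ⊗ A.) -/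
open TensorProduct

noncomputable section

variable {k : Type*} [Field k] [CharZero k]
variable {A : Type*} [NonUnitalRing A] [Module k A] [SMulCommClass k A A] [IsScalarTower k A A]

/-!
For `f ∈ A*` write `ev_f := id ⊗ f : A ⊗ A → A`, so that `n(a, f, c) = ev_f ⟪c, a⟫`. Since
`ev_f (x · b) = ev_{b·f} x` and `ev_f (a · x) = a · ev_f x`, applying `ev_f` to the Leibniz
identity `⟪c, ab⟫ = ⟪c, a⟫ · b + a · ⟪c, b⟫` gives the Stasheff identity. Conversely, the maps
`ev_f` jointly separate the points of `A ⊗ A`, because `A` has a basis.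
-/

namespace TensorProduct

variable {R M N : Type*}

theorem ext_of_forall_rid_map_id_dual [CommRing R] [AddCommGroup M] [Module R M]
    [AddCommGroup N] [Module R N] [Module.Free R N] {x y : M ⊗[R] N}
    (h : ∀ f : Module.Dual R N,
      TensorProduct.rid R M (map LinearMap.id f x) = TensorProduct.rid R M (map LinearMap.id f y)) :
    x = y := by
  let b := Module.Free.chooseBasis R N
  let E : M ⊗[R] N ≃ₗ[R] _ →₀ M := (b.repr.lTensor M).trans (finsuppScalarRight R R M _)
  have hE (i) (z : M ⊗[R] N) :
      E z i = TensorProduct.rid R M (map LinearMap.id (b.coord i) z) := by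
    rw [LinearEquiv.trans_apply, finsuppScalarRight_apply, AlgebraTensorModule.rid_eq_rid]
    induction z using TensorProduct.induction_on with
    | zero => simp
    | tmul m n => simp
    | add z w hz hw => simp only [map_add, hz, hw]
  exact E.injective <| Finsupp.ext fun i => by rw [hE, hE, h]

theorem rid_map [CommSemiring R] [AddCommMonoid M] [Module R M] [AddCommMonoid N]
    [Module R N] {M' : Type*} [AddCommMonoid M'] [Module R M'] (g : M →ₗ[R] M')
    (f : Module.Dual R N) (x : M ⊗[R] N) :
    TensorProduct.rid R M' (map g f x) = g (TensorProduct.rid R M (map LinearMap.id f x)) := by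
  induction x using TensorProduct.induction_on with
  | zero => simp
  | tmul m n => simp
  | add x y hx hy => simp only [map_add, hx, hy]

end TensorProduct

open TensorProduct

omit [CharZero k] in
theorem rid_map_rAct_add_lAct (f : Module.Dual k A) (a b : A) (x y : A ⊗[k] A) :
    TensorProduct.rid k A (map LinearMap.id f (rAct b x + lAct a y)) =
      TensorProduct.rid k A (map LinearMap.id (dL b f) x) +
        a * TensorProduct.rid k A (map LinearMap.id f y) := by
  rw [map_add, map_add, rAct, lAct, map_map, map_map, LinearMap.id_comp, LinearMap.id_comp,
    LinearMap.comp_id, rid_map (LinearMap.mulLeft k a)]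
  rfl

/-- The Leibniz condition is equivalent to the quartic Stasheff
identity `n(ab,f,c) = n(a, b·f, c) + a·n(b,f,c)`. -/
theorem leibniz_iff_quarticStasheff (br : A →ₗ[k] A →ₗ[k] A ⊗[k] A) :
    (∀ a b c : A, br a (b * c) = rAct c (br a b) + lAct b (br a c)) ↔
    (∀ (a b c : A) (f : Module.Dual k A),
      nMap br (a * b) f c = nMap br a (dL b f) c + a * nMap br b f c) := by
  constructor
  · intro hL a b c f
    rw [nMap, hL, rid_map_rAct_add_lAct]
    rfl
  · intro hS c a b
    refine ext_of_forall_rid_map_id_dual fun f => ?_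
    rw [rid_map_rAct_add_lAct]
    exact hS a b c f
end
end

section
/- If a k-bilinear map ⟪−,−⟫ : A × A → A ⊗ A satisfies the antisymmetry condition (i) and the Leibniz condition (ii), then its associated trilinear maps satisfy m(f, a, g·b) = m(f, a, g)·b − f·n(a, g, b) in A* for all a, b ∈ A and f, g ∈ A*, where the A-actions on A* are (a·f)(c) = f(ca) and (f·b)(c) = f(bc). (This is the Stasheff identity SI(4) on the component A*[−1] ⊗ A ⊗ A*[−1] ⊗ A, which the proof of Theorem 5.1 deduces from the restricted identity by cyclic rotation.) -/
/-!
Antisymmetry converts the Leibniz rule in the second argument of the bracket into one in the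
first: `⟪bc, a⟫ = ⟪b, a⟫ ⋆ c + b ⋆ ⟪c, a⟫`, where `⋆` are now the *inner* actions
`(u ⊗ v) ⋆ c = uc ⊗ v` and `b ⋆ (u ⊗ v) = u ⊗ bv`. Evaluating both sides of the identity at `c`
and pairing with `f ⊗ g`, the inner left action by `b` becomes `g ↦ g·b`, giving
`m(f, a, g·b)(c)`, while the inner right action by `c` gives `f(n(a, g, b) c)`.
-/

open TensorProduct

noncomputable section

variable {k : Type*} [Field k] [CharZero k]
variable {A : Type*} [NonUnitalRing A] [Module k A] [SMulCommClass k A A] [IsScalarTower k A A]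

omit [CharZero k] [IsScalarTower k A A] in
theorem comm_comp_lAct_comp_comm (b : A) :
    (TensorProduct.comm k A A).toLinearMap ∘ₗ lAct b ∘ₗ (TensorProduct.comm k A A).toLinearMap =
      TensorProduct.map LinearMap.id (LinearMap.mulLeft k b) :=
  TensorProduct.ext' fun _ _ => rfl

omit [CharZero k] [SMulCommClass k A A] in
theorem comm_comp_rAct_comp_comm (c : A) :
    (TensorProduct.comm k A A).toLinearMap ∘ₗ rAct c ∘ₗ (TensorProduct.comm k A A).toLinearMap =
      TensorProduct.map (LinearMap.mulRight k c) LinearMap.id :=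
  TensorProduct.ext' fun _ _ => rfl

omit [CharZero k] in
theorem br_mul_left_of_antisymm_of_leibniz (br : A →ₗ[k] A →ₗ[k] A ⊗[k] A)
    (h1 : ∀ a b : A, br b a = - (TensorProduct.comm k A A) (br a b))
    (h2 : ∀ a b c : A, br a (b * c) = rAct c (br a b) + lAct b (br a c)) (a b c : A) :
    br (b * c) a = TensorProduct.map (LinearMap.mulRight k c) LinearMap.id (br b a) +
      TensorProduct.map LinearMap.id (LinearMap.mulLeft k b) (br c a) := by
  rw [← comm_comp_rAct_comp_comm, ← comm_comp_lAct_comp_comm, h1 a (b * c), h2, h1 b a, h1 c a]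
  simp only [LinearMap.comp_apply, LinearEquiv.coe_coe, map_add, map_neg, neg_neg, neg_add]

omit [CharZero k] [IsScalarTower k A A] in
theorem pair2_comp_map_id_mulLeft (f g : Module.Dual k A) (b : A) :
    pair2 f g ∘ₗ TensorProduct.map LinearMap.id (LinearMap.mulLeft k b) = pair2 f (dR g b) :=
  TensorProduct.ext' fun _ _ => rfl

omit [CharZero k] [SMulCommClass k A A] in
theorem pair2_map_mulRight_id (f g : Module.Dual k A) (c : A) (t : A ⊗[k] A) :
    pair2 f g (TensorProduct.map (LinearMap.mulRight k c) LinearMap.id t) =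
      dL c f (TensorProduct.rid k A (TensorProduct.map LinearMap.id g t)) := by
  induction t using TensorProduct.induction_on with
  | zero => simp
  | tmul u v => simp [pair2, dL, mul_comm]
  | add x y hx hy => simp only [map_add, hx, hy]

/-- If the bracket satisfies antisymmetry (i) and Leibniz (ii), then
`m(f, a, g·b) = m(f,a,g)·b − f·n(a,g,b)` in `A*` (the Stasheff identity SI(4) on the
component `A*[-1] ⊗ A ⊗ A*[-1] ⊗ A`). -/
theorem quarticStasheff_on_dual_component (br : A →ₗ[k] A →ₗ[k] A ⊗[k] A)
    (h1 : ∀ a b : A, br b a = - (TensorProduct.comm k A A) (br a b))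
    (h2 : ∀ a b c : A, br a (b * c) = rAct c (br a b) + lAct b (br a c)) :
    ∀ (a b : A) (f g : Module.Dual k A),
      mMap br f a (dR g b) = dR (mMap br f a g) b - dR f (nMap br a g b) := by
  intro a b f g
  ext c
  change pair2 f (dR g b) (br c a) = pair2 f g (br (b * c) a) - f (nMap br a g b * c)
  rw [br_mul_left_of_antisymm_of_leibniz br h1 h2, map_add, pair2_map_mulRight_id,
    ← pair2_comp_map_id_mulLeft]
  exact (add_sub_cancel_left _ _).symm
end
end

section
/- Let ⟪−,−⟫ be a double Poisson bracket on A and define {a,b} := μ(⟪a,b⟫), where μ : A ⊗ A → A is the multiplication map. Then {−,−} descends to a well-defined k-bilinear bracket on the quotient vector space A/[A,A], and this induced bracket makes A/[A,A] a Lie algebra over k. (This is the degree d = 0 case, with zero differential, of Proposition 3.3.) -/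
open TensorProduct

noncomputable section

variable {k : Type*} [Field k] [CharZero k]
variable {A : Type*} [NonUnitalRing A] [Module k A] [SMulCommClass k A A] [IsScalarTower k A A]

/-- The multiplication map `μ : A ⊗ A → A`. -/
def mu : A ⊗[k] A →ₗ[k] A := TensorProduct.lift (LinearMap.mul k A)

/-- The `k`-linear span `[A,A]` of all commutators `ab − ba`. -/
def commSpan : Submodule k A := Submodule.span k {x : A | ∃ a b : A, x = a * b - b * a}

/-!
Modulo `[A,A]` the multiplication `μ` is invariant under the flip `τ`, and the triple
multiplication `μ₃ = μ ∘ (μ ⊗ id)` under the cyclic permutation `σ`. Hence antisymmetry of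
`⟪-,-⟫` gives `{b,a} ≡ -{a,b}`, and the Leibniz rule gives `{a, μ x} ≡ μ₃ ⟪a, x + τ x⟫_L`;
for `x = b ⊗ c - c ⊗ b` the right side vanishes, so `{a,[b,c]} ≡ 0` and the bracket descends.
For `x = ⟪b,c⟫` it gives `{a,{b,c}} ≡ P(a,b,c) - P(a,c,b)` with `P(a,b,c) = μ₃ ⟪a,⟪b,c⟫⟫_L`,
and applying `μ₃` to the double Jacobi identity shows that the cyclic sums of `P` vanish
modulo `[A,A]`; the Jacobi identity of `{-,-}` is the difference of two such cyclic sums.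
-/

local notation:max x:max "♮" => (Submodule.Quotient.mk x : A ⧸ commSpan (k := k) (A := A))

section
omit [CharZero k] [SMulCommClass k A A] [IsScalarTower k A A]

lemma mk_mul_comm (a b : A) : (a * b)♮ = (b * a)♮ :=
  (Submodule.Quotient.eq _).mpr (Submodule.subset_span ⟨a, b, rfl⟩)

end

section
omit [CharZero k]

lemma mu_tmul (u v : A) : mu (k := k) (u ⊗ₜ v) = u * v := rfl

lemma mu_rAct (c : A) (x : A ⊗[k] A) : mu (rAct c x) = mu x * c := by
  have : mu ∘ₗ rAct c = LinearMap.mulRight k c ∘ₗ mu :=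
    TensorProduct.ext' fun u v => by simp [rAct, mu_tmul, mul_assoc]
  exact LinearMap.congr_fun this x

lemma mu_lAct (b : A) (x : A ⊗[k] A) : mu (lAct b x) = b * mu x := by
  have : mu ∘ₗ lAct b = LinearMap.mulLeft k b ∘ₗ mu :=
    TensorProduct.ext' fun u v => by simp [lAct, mu_tmul, mul_assoc]
  exact LinearMap.congr_fun this x

lemma mk_mu_comm (x : A ⊗[k] A) : (mu (TensorProduct.comm k A A x))♮ = (mu x)♮ := by
  have : commSpan.mkQ ∘ₗ mu ∘ₗ (TensorProduct.comm k A A).toLinearMap = commSpan.mkQ ∘ₗ mu :=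
    TensorProduct.ext' fun u v => mk_mul_comm v u
  exact LinearMap.congr_fun this x

def mu3 : (A ⊗[k] A) ⊗[k] A →ₗ[k] A := mu ∘ₗ TensorProduct.map mu LinearMap.id

lemma mu3_tmul (x : A ⊗[k] A) (w : A) : mu3 (x ⊗ₜ w) = mu x * w := rfl

lemma mk_mu3_cyc (t : (A ⊗[k] A) ⊗[k] A) : (mu3 (cyc t))♮ = (mu3 t)♮ := by
  have : commSpan.mkQ ∘ₗ mu3 ∘ₗ cyc (k := k) (A := A) = commSpan.mkQ ∘ₗ mu3 := by
    refine TensorProduct.ext_threefold fun u v w => ?_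
    simpa [cyc, mu3_tmul, mu_tmul, mul_assoc] using mk_mul_comm (k := k) w (u * v)
  exact LinearMap.congr_fun this t

def bracketMod (br : A →ₗ[k] A →ₗ[k] A ⊗[k] A) :
    A →ₗ[k] A →ₗ[k] A ⧸ commSpan (k := k) (A := A) :=
  br.compr₂ (commSpan.mkQ ∘ₗ mu)

namespace IsDoublePoisson

variable {br : A →ₗ[k] A →ₗ[k] A ⊗[k] A}

lemma comm_br (h : IsDoublePoisson br) (a b : A) :
    TensorProduct.comm k A A (br a b) = -br b a := by
  simp [h.1 b a]

lemma mk_mu_swap (h : IsDoublePoisson br) (a b : A) :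
    (mu (br b a))♮ = -(mu (br a b))♮ := by
  rw [h.1 a b, map_neg, Submodule.Quotient.mk_neg, mk_mu_comm]

lemma mk_mu_br_mu (h : IsDoublePoisson br) (a : A) (x : A ⊗[k] A) :
    (mu (br a (mu x)))♮ = (mu3 (brL br a (x + TensorProduct.comm k A A x)))♮ := by
  have : commSpan.mkQ ∘ₗ mu ∘ₗ br a ∘ₗ mu = commSpan.mkQ ∘ₗ mu3 ∘ₗ brL br a ∘ₗ
      (LinearMap.id + (TensorProduct.comm k A A).toLinearMap) :=
    -- `{a, uv} = {a,u} v + u {a,v} ≡ {a,u} v + {a,v} u`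
    TensorProduct.ext' fun u v => by
      simp [mu_tmul, h.2.1, mu_rAct, mu_lAct, brL, mu3_tmul, mk_mul_comm u]
  exact LinearMap.congr_fun this x

lemma mk_mu_br_commutator (h : IsDoublePoisson br) (a b c : A) :
    (mu (br a (b * c - c * b)))♮ = 0 := by
  have := h.mk_mu_br_mu a (b ⊗ₜ c - c ⊗ₜ b)
  simpa [mu_tmul] using this

lemma mk_mu_br_commutator_left (h : IsDoublePoisson br) (a b c : A) :
    (mu (br (b * c - c * b) a))♮ = 0 := by
  rw [h.mk_mu_swap, h.mk_mu_br_commutator, neg_zero]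

lemma commSpan_le_ker_bracketMod (h : IsDoublePoisson br) :
    commSpan ≤ (bracketMod br).ker := by
  refine Submodule.span_le.mpr ?_
  rintro _ ⟨b, c, rfl⟩
  ext a
  exact h.mk_mu_br_commutator_left a b c

lemma commSpan_le_ker_flip_bracketMod (h : IsDoublePoisson br) :
    commSpan ≤ (bracketMod br).flip.ker := by
  refine Submodule.span_le.mpr ?_
  rintro _ ⟨b, c, rfl⟩
  ext a
  exact h.mk_mu_br_commutator a b c

lemma mk_mu_br_mu_br (h : IsDoublePoisson br) (a b c : A) :
    (mu (br a (mu (br b c))))♮ = (mu3 (brL br a (br b c)))♮ - (mu3 (brL br a (br c b)))♮ := by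
  rw [h.mk_mu_br_mu, h.comm_br, ← sub_eq_add_neg, map_sub, map_sub, Submodule.Quotient.mk_sub]

lemma mk_mu3_cyclic_sum (h : IsDoublePoisson br) (a b c : A) :
    (mu3 (brL br a (br b c)))♮ + (mu3 (brL br b (br c a)))♮ + (mu3 (brL br c (br a b)))♮
      = 0 := by
  simpa only [map_add, map_zero, Submodule.Quotient.mk_add, Submodule.Quotient.mk_zero,
    mk_mu3_cyc] using congrArg (fun t => (mu3 t)♮) (h.2.2 a b c)

lemma mk_jacobi (h : IsDoublePoisson br) (a b c : A) :
    (mu (br a (mu (br b c))))♮ = (mu (br (mu (br a b)) c))♮ + (mu (br b (mu (br a c))))♮ := by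
  linear_combination (norm := module) h.mk_mu_br_mu_br a b c - h.mk_mu_br_mu_br b a c
    + h.mk_mu_br_mu_br c a b - h.mk_mu_swap c (mu (br a b))
    + h.mk_mu3_cyclic_sum a b c - h.mk_mu3_cyclic_sum a c b

end IsDoublePoisson

end

lemma IsDoublePoisson.mk_mu_self {br : A →ₗ[k] A →ₗ[k] A ⊗[k] A} (h : IsDoublePoisson br)
    (a : A) : (mu (br a a))♮ = 0 :=
  have : IsAddTorsionFree (A ⧸ commSpan (k := k) (A := A)) := .of_isTorsionFree k _
  self_eq_neg.mp (h.mk_mu_swap a a)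

/-- If `⟪-,-⟫` is a double Poisson bracket on `A`, then
`{a,b} := μ(⟪a,b⟫)` descends to a well-defined bilinear bracket on `A/[A,A]` which
makes `A/[A,A]` a Lie algebra over `k`. -/
theorem descends_to_lie_bracket_on_quotient (br : A →ₗ[k] A →ₗ[k] A ⊗[k] A)
    (h : IsDoublePoisson br) :
    ∃ L : (A ⧸ (commSpan (k := k) (A := A))) →ₗ[k]
        (A ⧸ (commSpan (k := k) (A := A))) →ₗ[k] (A ⧸ (commSpan (k := k) (A := A))),
      (∀ a b : A, L (Submodule.Quotient.mk a) (Submodule.Quotient.mk b)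
          = Submodule.Quotient.mk (mu (br a b))) ∧
      (∀ x, L x x = 0) ∧
      (∀ x y z, L x (L y z) = L (L x y) z + L y (L x z)) := by
  refine ⟨(bracketMod br).liftQ₂ _ _ h.commSpan_le_ker_bracketMod
    h.commSpan_le_ker_flip_bracketMod, fun a b => rfl, ?_, ?_⟩
  · rintro ⟨a⟩
    exact h.mk_mu_self a
  · rintro ⟨a⟩ ⟨b⟩ ⟨c⟩
    exact h.mk_jacobi a b c
end
end

section
/- Let φ : (A, ⟪−,−⟫_A) → (B, ⟪−,−⟫_B) be a morphism of double Poisson algebras, and define the mixed trilinear maps n_φ(a, f, b) := n_A(a, f∘φ, b) for a, b ∈ A, f ∈ B*, and m_φ(f, a, g) := m_B(f, φ(a), g) for f, g ∈ B*, a ∈ A. Then n_φ(n_φ(a,f,b), g, c) + n_φ(a, m_φ(f,b,g), c) − n_φ(a, f, n_φ(b,g,c)) = 0 for all a, b, c ∈ A and f, g ∈ B*. (This is the quintic Stasheff identity SI(5) for the A∞-structure on ∂_{d−1}φ = A ⊕ B*[d−1] constructed in Theorem 5.5, in the degree 0, trivially graded case.) -/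
/-!
Put `F = f ∘ φ` and `G = g ∘ φ`. Because `φ` intertwines the brackets, `m_φ(f, b, g) ∘ φ`
is `m_A(F, b, G)`, so all three terms only involve `⟪-,-⟫_A`. Applying the contraction
`(u ⊗ v) ⊗ w ↦ F(w) G(v) u`, each term becomes the image of one of the three summands of the
double Jacobi identity for `(c, b, a)`, antisymmetry accounting for the signs and the cyclic
permutations; hence the sum vanishes.
-/

open TensorProduct

noncomputable section

variable {k : Type*} [Field k] [CharZero k]
variable {A : Type*} [NonUnitalRing A] [Module k A] [SMulCommClass k A A] [IsScalarTower k A A]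

variable {B : Type*} [NonUnitalRing B] [Module k B] [SMulCommClass k B B]
  [IsScalarTower k B B]

/-- A morphism of double Poisson algebras: an algebra morphism intertwining the
brackets, `(φ ⊗ φ)(⟪a,a'⟫_A) = ⟪φ(a), φ(a')⟫_B`. -/
def IsDPMorphism (brA : A →ₗ[k] A →ₗ[k] A ⊗[k] A) (brB : B →ₗ[k] B →ₗ[k] B ⊗[k] B)
    (φ : A →ₙₐ[k] B) : Prop :=
  ∀ a a' : A,
    TensorProduct.map (φ : A →ₗ[k] B) (φ : A →ₗ[k] B) (brA a a') = brB (φ a) (φ a')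

/-- The mixed triple product `n_φ(a, f, b) := n_A(a, f∘φ, b)` for `f ∈ B*`. -/
def nPhi (brA : A →ₗ[k] A →ₗ[k] A ⊗[k] A) (φ : A →ₙₐ[k] B)
    (a : A) (f : Module.Dual k B) (b : A) : A :=
  nMap brA a (f ∘ₗ (φ : A →ₗ[k] B)) b

/-- The mixed triple product `m_φ(f, a, g) := m_B(f, φ(a), g)` for `f, g ∈ B*`. -/
def mPhi (brB : B →ₗ[k] B →ₗ[k] B ⊗[k] B) (φ : A →ₙₐ[k] B)
    (f : Module.Dual k B) (a : A) (g : Module.Dual k B) : Module.Dual k B :=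
  mMap brB f (φ a) g

section Contraction

variable {R M : Type*} [CommSemiring R] [AddCommMonoid M] [Module R M]

def rightEval (F : Module.Dual R M) : M ⊗[R] M →ₗ[R] M :=
  (TensorProduct.rid R M).toLinearMap ∘ₗ TensorProduct.map LinearMap.id F

def rightEval₂ (G F : Module.Dual R M) : (M ⊗[R] M) ⊗[R] M →ₗ[R] M :=
  (TensorProduct.rid R M).toLinearMap ∘ₗ TensorProduct.map (rightEval G) F

@[simp]
lemma rightEval_tmul (F : Module.Dual R M) (u v : M) :
    rightEval F (u ⊗ₜ[R] v) = F v • u := by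
  simp [rightEval]

@[simp]
lemma rightEval₂_tmul (G F : Module.Dual R M) (s : M ⊗[R] M) (w : M) :
    rightEval₂ G F (s ⊗ₜ[R] w) = F w • rightEval G s := by
  simp [rightEval₂]

end Contraction

section Bracket

variable {K M N : Type*} [Field K] [NonUnitalRing M] [Module K M] [NonUnitalRing N] [Module K N]

lemma nMap_eq_rightEval (br : M →ₗ[K] M →ₗ[K] M ⊗[K] M) (a : M) (F : Module.Dual K M)
    (b : M) : nMap br a F b = rightEval F (br b a) :=
  rfl

@[simp]
lemma cyc_tmul (u v w : M) : cyc ((u ⊗ₜ[K] v) ⊗ₜ[K] w) = (w ⊗ₜ[K] u) ⊗ₜ[K] v := by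
  simp [cyc]

@[simp]
lemma brL_tmul (br : M →ₗ[K] M →ₗ[K] M ⊗[K] M) (x u v : M) :
    brL br x (u ⊗ₜ[K] v) = br x u ⊗ₜ[K] v := by
  simp [brL]

lemma pair2_comm_s12 (F G : Module.Dual K M) (s : M ⊗[K] M) :
    pair2 F G (TensorProduct.comm K M M s) = pair2 G F s := by
  induction s using TensorProduct.induction_on with
  | zero => simp
  | tmul u v => simp [pair2, mul_comm]
  | add x y hx hy => simp only [map_add, hx, hy]

lemma rightEval₂_cyc_tmul (G F : Module.Dual K M) (s : M ⊗[K] M) (w : M) :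
    rightEval₂ G F (cyc (s ⊗ₜ[K] w)) = pair2 G F s • w := by
  induction s using TensorProduct.induction_on with
  | zero => simp
  | tmul u v => simp [pair2, mul_smul, smul_comm (F v)]
  | add x y hx hy => simp only [TensorProduct.add_tmul, map_add, hx, hy, add_smul]

lemma rightEval₂_cyc_cyc_tmul (G F : Module.Dual K M) (s : M ⊗[K] M) (w : M) :
    rightEval₂ G F (cyc (cyc (s ⊗ₜ[K] w))) =
      G w • rightEval F (TensorProduct.comm K M M s) := by
  induction s using TensorProduct.induction_on with
  | zero => simp
  | tmul u v => simp [smul_comm (F u)]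
  | add x y hx hy => simp only [TensorProduct.add_tmul, map_add, hx, hy, smul_add]

lemma rightEval_bracket_rightEval_right (br : M →ₗ[K] M →ₗ[K] M ⊗[K] M) (c : M)
    (F G : Module.Dual K M) (t : M ⊗[K] M) :
    rightEval G (br c (rightEval F t)) = rightEval₂ G F (brL br c t) := by
  induction t using TensorProduct.induction_on with
  | zero => simp
  | tmul u v => simp
  | add x y hx hy => simp only [map_add, hx, hy]

variable {br : M →ₗ[K] M →ₗ[K] M ⊗[K] M}

lemma rightEval_mMap_of_antisymm (hbr : ∀ a b, br b a = -TensorProduct.comm K M M (br a b))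
    (b : M) (F G : Module.Dual K M) (t : M ⊗[K] M) :
    rightEval (mMap br F b G) t =
      -rightEval₂ G F (cyc (brL br b (TensorProduct.comm K M M t))) := by
  induction t using TensorProduct.induction_on with
  | zero => simp
  | tmul u v =>
    have hpair : pair2 F G (br v b) = -pair2 G F (br b v) := by
      rw [hbr b v, map_neg, pair2_comm_s12]
    simp [mMap, hpair, rightEval₂_cyc_tmul]
  | add x y hx hy => simp only [map_add, hx, hy, neg_add]

lemma rightEval_bracket_rightEval_left_of_antisymm
    (hbr : ∀ a b, br b a = -TensorProduct.comm K M M (br a b)) (a : M)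
    (F G : Module.Dual K M) (t : M ⊗[K] M) :
    rightEval F (br (rightEval G t) a) = -rightEval₂ G F (cyc (cyc (brL br a t))) := by
  induction t using TensorProduct.induction_on with
  | zero => simp
  | tmul u v => simp [hbr a u, rightEval₂_cyc_cyc_tmul]
  | add x y hx hy => simp only [map_add, LinearMap.add_apply, hx, hy, neg_add]

lemma pair2_comp_map (f g : Module.Dual K N) (ψ : M →ₗ[K] N) :
    pair2 f g ∘ₗ TensorProduct.map ψ ψ = pair2 (f ∘ₗ ψ) (g ∘ₗ ψ) :=
  TensorProduct.ext' fun _ _ => by simp [pair2]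

lemma mPhi_comp_eq_mMap {brA : M →ₗ[K] M →ₗ[K] M ⊗[K] M} {brB : N →ₗ[K] N →ₗ[K] N ⊗[K] N}
    {φ : M →ₙₐ[K] N} (hφ : IsDPMorphism brA brB φ) (f g : Module.Dual K N) (b : M) :
    mPhi brB φ f b g ∘ₗ (φ : M →ₗ[K] N) =
      mMap brA (f ∘ₗ (φ : M →ₗ[K] N)) b (g ∘ₗ (φ : M →ₗ[K] N)) := by
  ext x
  simp only [mPhi, mMap, LinearMap.comp_apply, LinearMap.flip_apply, ← pair2_comp_map]
  exact congrArg (pair2 f g) (hφ x b).symm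

end Bracket

theorem mixed_quintic_stasheff_general (brA : A →ₗ[k] A →ₗ[k] A ⊗[k] A)
    (brB : B →ₗ[k] B →ₗ[k] B ⊗[k] B) (hA : IsDoublePoisson brA)
    (φ : A →ₙₐ[k] B) (hφ : IsDPMorphism brA brB φ) :
    ∀ (a b c : A) (f g : Module.Dual k B),
      nPhi brA φ (nPhi brA φ a f b) g c + nPhi brA φ a (mPhi brB φ f b g) c
        - nPhi brA φ a f (nPhi brA φ b g c) = 0 := by
  intro a b c f g
  obtain ⟨hanti, -, hjacobi⟩ := hA
  set F : Module.Dual k A := f ∘ₗ (φ : A →ₗ[k] B)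
  set G : Module.Dual k A := g ∘ₗ (φ : A →ₗ[k] B)
  have h₁ : nPhi brA φ (nPhi brA φ a f b) g c = rightEval₂ G F (brL brA c (brA b a)) :=
    rightEval_bracket_rightEval_right brA c F G (brA b a)
  have h₂ : nPhi brA φ a (mPhi brB φ f b g) c =
      rightEval₂ G F (cyc (brL brA b (brA a c))) := by
    rw [nPhi, mPhi_comp_eq_mMap hφ, nMap_eq_rightEval,
      rightEval_mMap_of_antisymm hanti b F G, hanti c a]
    simp only [map_neg]
  have h₃ : nPhi brA φ a f (nPhi brA φ b g c) =
      -rightEval₂ G F (cyc (cyc (brL brA a (brA c b)))) :=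
    rightEval_bracket_rightEval_left_of_antisymm hanti a F G (brA c b)
  rw [h₁, h₂, h₃, sub_neg_eq_add, ← map_add, ← map_add, hjacobi c b a, map_zero]

/-- The quintic Stasheff identity SI(5) for the mixed triple
products `n_φ`, `m_φ` on `∂φ = A ⊕ B*[-1]`:
`n_φ(n_φ(a,f,b), g, c) + n_φ(a, m_φ(f,b,g), c) − n_φ(a, f, n_φ(b,g,c)) = 0`. -/
theorem mixed_quintic_stasheff (brA : A →ₗ[k] A →ₗ[k] A ⊗[k] A)
    (brB : B →ₗ[k] B →ₗ[k] B ⊗[k] B) (hA : IsDoublePoisson brA)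
    (hB : IsDoublePoisson brB) (φ : A →ₙₐ[k] B) (hφ : IsDPMorphism brA brB φ) :
    ∀ (a b c : A) (f g : Module.Dual k B),
      nPhi brA φ (nPhi brA φ a f b) g c + nPhi brA φ a (mPhi brB φ f b g) c
        - nPhi brA φ a f (nPhi brA φ b g c) = 0 :=
  mixed_quintic_stasheff_general brA brB hA φ hφ
end
end

section
/- Let φ : (A, ⟪−,−⟫_A) → (B, ⟪−,−⟫_B) be a morphism of double Poisson algebras, and define n_φ(a, f, b) := n_A(a, f∘φ, b) and m_φ(f, a, g) := m_B(f, φ(a), g) as above. Then g(φ(n_φ(a, f, b))) = m_φ(g, a, f)(φ(b)) for all a, b ∈ A and f, g ∈ B*; equivalently, the bilinear form γ_φ on E_φ = A ⊕ B* is cyclically invariant with respect to the mixed triple product on E_φ. (This is the cyclicity property of γ_φ with respect to m₃^φ established in the proof of Theorem 5.5, in the degree 0, trivially graded case.) -/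
/-! Both sides are `g ⊗ f` evaluated on `⟪φ b, φ a⟫_B = (φ ⊗ φ)⟪b, a⟫_A`. -/

open TensorProduct

noncomputable section

variable {k : Type*} [Field k] [CharZero k]
variable {A : Type*} [NonUnitalRing A] [Module k A] [SMulCommClass k A A] [IsScalarTower k A A]

variable {B : Type*} [NonUnitalRing B] [Module k B] [SMulCommClass k B B]
  [IsScalarTower k B B]

theorem pair2_map_apply {K M N : Type*} [Field K] [AddCommGroup M] [Module K M]
    [NonUnitalRing N] [Module K N] (φ : M →ₗ[K] N) (f g : Module.Dual K N) (t : M ⊗[K] M) :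
    pair2 g f (TensorProduct.map φ φ t) =
      g (φ (TensorProduct.rid K M (TensorProduct.map LinearMap.id (f ∘ₗ φ) t))) := by
  have h : pair2 g f ∘ₗ TensorProduct.map φ φ =
      g ∘ₗ φ ∘ₗ (TensorProduct.rid K M).toLinearMap ∘ₗ
        TensorProduct.map LinearMap.id (f ∘ₗ φ) :=
    TensorProduct.ext' fun u v => by simp [pair2, mul_comm]
  exact LinearMap.congr_fun h t

theorem mixed_cyclicity_general (brA : A →ₗ[k] A →ₗ[k] A ⊗[k] A)
    (brB : B →ₗ[k] B →ₗ[k] B ⊗[k] B) (φ : A →ₙₐ[k] B) (hφ : IsDPMorphism brA brB φ) :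
    ∀ (a b : A) (f g : Module.Dual k B),
      g (φ (nPhi brA φ a f b)) = mPhi brB φ g a f (φ b) := by
  intro a b f g
  calc g (φ (nPhi brA φ a f b))
      = pair2 g f (TensorProduct.map (φ : A →ₗ[k] B) φ (brA b a)) := by
        rw [pair2_map_apply]; rfl
    _ = mPhi brB φ g a f (φ b) := by rw [hφ b a]; rfl

/-- Cyclicity of the form `γ_φ` with respect to the mixed triple
product: `g(φ(n_φ(a,f,b))) = m_φ(g,a,f)(φ(b))` for all `a, b ∈ A`, `f, g ∈ B*`. -/
theorem mixed_cyclicity (brA : A →ₗ[k] A →ₗ[k] A ⊗[k] A)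
    (brB : B →ₗ[k] B →ₗ[k] B ⊗[k] B) (hA : IsDoublePoisson brA)
    (hB : IsDoublePoisson brB) (φ : A →ₙₐ[k] B) (hφ : IsDPMorphism brA brB φ) :
    ∀ (a b : A) (f g : Module.Dual k B),
      g (φ (nPhi brA φ a f b)) = mPhi brB φ g a f (φ b) :=
  mixed_cyclicity_general brA brB φ hφ
end
end
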